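/- Let G be a group, λ a nonempty set, and σ any automorphism of the Brandt semigroup B_λ(G). Then there exist a group automorphism h : G → G, a bijection φ : λ → λ, and a map u : λ → G such that σ(α, g, β) = (φ(α), u(α)·h(g)·(u(β))⁻¹, φ(β)) for all α, β ∈ λ and all g ∈ G, and σ(0) = 0. -/

import Mathlib

/-- The Brandt semigroup `B_Λ(G)` over a group `G`: its underlying set is
`(Λ × G × Λ) ∪ {0}`, where `none` plays the role of the zero `0`. -/
def BrandtG (Λ G : Type*) : Type _ :=
  Option (Λ × G × Λ)

namespace BrandtG

variable {Λ G : Type*}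

instance : Zero (BrandtG Λ G) := ⟨none⟩

open Classical in
/-- `(α, a, β)·(γ, b, δ) = (α, ab, δ)` if `β = γ`, and `0` otherwise;
`0` is a two-sided zero. -/
noncomputable instance [Mul G] : Mul (BrandtG Λ G) :=
  ⟨fun x y =>
    match x, y with
    | some (α, a, β), some (γ, b, δ) =>
        if β = γ then some (α, a * b, δ) else 0
    | _, _ => 0⟩

end BrandtG

/-- An automorphism of a semigroup: a bijective map preserving the multiplication. -/
def IsSemigroupAut {T : Type*} [Mul T] (σ : T → T) : Prop :=
  Function.Bijective σ ∧ ∀ x y : T, σ (x * y) = σ x * σ y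

/-! An automorphism `σ` fixes `0`, the only element absorbing everything, so it permutes the
nonzero idempotents `(α, 1, α)`; write `σ (α, 1, α) = (φ α, 1, φ α)`. Since `(α, 1, α)` is a left
identity exactly on row `α` and a right identity exactly on column `α`, `σ (α, g, β)` has the form
`(φ α, f α β g, φ β)`, and multiplicativity of `σ` says that `f` is a functor on the pair groupoid:
`f α γ (g * g') = f α β g * f β γ g'`. Any such functor is determined by a base point `a`:
`f α β g = u α * f a a g * (u β)⁻¹` with `u α = f α a 1`. -/

section PairGroupoid

variable {Λ G H : Type*} [Group G] [Group H] {F : Λ → Λ → G → H}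

lemma map_one_of_map_mul (hF : ∀ α β γ g g', F α γ (g * g') = F α β g * F β γ g') (α : Λ) :
    F α α 1 = 1 := by
  have h := hF α α α 1 1
  rw [one_mul] at h
  exact left_eq_mul.mp h

lemma eq_mul_mul_inv_of_map_mul (hF : ∀ α β γ g g', F α γ (g * g') = F α β g * F β γ g')
    (a α β : Λ) (g : G) : F α β g = F α a 1 * F a a g * (F β a 1)⁻¹ := by
  have h_left : F α β g = F α a 1 * F a β g := by simpa only [one_mul] using hF α a β 1 g
  have h_right : F a β g = F a a g * F a β 1 := by simpa only [mul_one] using hF a a β g 1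
  have h_inv : F a β 1 = (F β a 1)⁻¹ := by
    rw [eq_inv_iff_mul_eq_one, ← map_one_of_map_mul hF a]
    simpa only [mul_one] using (hF a β a 1 1).symm
  rw [h_left, h_right, h_inv, mul_assoc]

end PairGroupoid

namespace BrandtG

variable {Λ G : Type*}

-- `some (α, g, β)` alone elaborates in `Option`, where the Brandt `*` and `0` are not found.
abbrev mk (α : Λ) (g : G) (β : Λ) : BrandtG Λ G :=
  some (α, g, β)

lemma mk_ne_zero (α : Λ) (g : G) (β : Λ) : mk α g β ≠ 0 :=
  Option.some_ne_none _

lemma mk_inj {α β α' β' : Λ} {g g' : G} :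
    mk α g β = mk α' g' β' ↔ α = α' ∧ g = g' ∧ β = β' :=
  Option.some_inj.trans (by simp only [Prod.mk.injEq])

lemma exists_eq_mk_of_ne_zero {x : BrandtG Λ G} (hx : x ≠ 0) : ∃ α g β, x = mk α g β := by
  rcases x with _ | ⟨α, g, β⟩
  · exact absurd rfl hx
  · exact ⟨α, g, β, rfl⟩

section Mul

variable [Mul G]

lemma mk_mul_mk_of_eq (α β δ : Λ) (a b : G) : mk α a β * mk β b δ = mk α (a * b) δ :=
  if_pos rfl

lemma mk_mul_mk_of_ne {α β γ δ : Λ} (a b : G) (h : β ≠ γ) : mk α a β * mk γ b δ = 0 :=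
  if_neg h

protected lemma zero_mul (x : BrandtG Λ G) : 0 * x = 0 := by
  cases x <;> rfl

protected lemma mul_zero (x : BrandtG Λ G) : x * 0 = 0 := by
  rcases x with _ | ⟨_, _, _⟩ <;> rfl

lemma mk_mul_mk_eq_mk {α β γ δ p q : Λ} {a b k : G} :
    mk α a β * mk γ b δ = mk p k q ↔ β = γ ∧ α = p ∧ a * b = k ∧ δ = q := by
  by_cases h : β = γ
  · subst h
    rw [mk_mul_mk_of_eq, mk_inj]
    exact ⟨fun h => ⟨rfl, h⟩, And.right⟩
  · rw [mk_mul_mk_of_ne _ _ h]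
    exact iff_of_false (mk_ne_zero _ _ _).symm (fun h' => h h'.1)

end Mul

lemma eq_mk_one_of_mul_self [Group G] {x : BrandtG Λ G} (hx : x * x = x) (hx0 : x ≠ 0) :
    ∃ γ, x = mk γ 1 γ := by
  rcases x with _ | ⟨α, a, β⟩
  · exact absurd rfl hx0
  · obtain ⟨rfl, -, ha, -⟩ := mk_mul_mk_eq_mk.mp hx
    exact ⟨β, by rw [mul_eq_right.mp ha]⟩

section Automorphism

variable {σ : BrandtG Λ G → BrandtG Λ G}

lemma aut_map_zero [Mul G] (hσ : IsSemigroupAut σ) : σ 0 = 0 := by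
  obtain ⟨x, hx⟩ := hσ.1.2 0
  calc σ 0 = σ (0 * x) := by rw [BrandtG.zero_mul]
    _ = 0 := by rw [hσ.2, hx, BrandtG.mul_zero]

lemma aut_map_ne_zero_iff [Mul G] (hσ : IsSemigroupAut σ) {x : BrandtG Λ G} :
    σ x ≠ 0 ↔ x ≠ 0 :=
  hσ.1.1.ne_iff' (aut_map_zero hσ)

variable [Group G]

lemma exists_aut_map_mk_one (hσ : IsSemigroupAut σ) (α : Λ) :
    ∃ γ, σ (mk α 1 α) = mk γ 1 γ := by
  refine eq_mk_one_of_mul_self ?_ (aut_map_ne_zero_iff hσ |>.mpr (mk_ne_zero _ _ _))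
  rw [← hσ.2, mk_mul_mk_of_eq, one_mul]

lemma exists_aut_map_mk (hσ : IsSemigroupAut σ) :
    ∃ (φ : Λ → Λ) (f : Λ → Λ → G → G), ∀ α β g, σ (mk α g β) = mk (φ α) (f α β g) (φ β) := by
  choose φ hφ using exists_aut_map_mk_one hσ
  suffices ∀ α β (g : G), ∃ k, σ (mk α g β) = mk (φ α) k (φ β) by
    choose f hf using this
    exact ⟨φ, f, hf⟩
  intro α β g
  rcases hx : σ (mk α g β) with _ | ⟨p, k, q⟩
  · exact absurd hx (aut_map_ne_zero_iff hσ |>.mpr (mk_ne_zero _ _ _))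
  · have h_row : σ (mk α 1 α) * σ (mk α g β) = σ (mk α g β) := by
      rw [← hσ.2, mk_mul_mk_of_eq, one_mul]
    have h_col : σ (mk α g β) * σ (mk β 1 β) = σ (mk α g β) := by
      rw [← hσ.2, mk_mul_mk_of_eq, mul_one]
    rw [hx, hφ] at h_row h_col
    obtain ⟨rfl, -⟩ := mk_mul_mk_eq_mk.mp h_row
    obtain ⟨-, -, -, rfl⟩ := mk_mul_mk_eq_mk.mp h_col
    exact ⟨k, rfl⟩

variable {φ : Λ → Λ} {f : Λ → Λ → G → G} (hf : ∀ α β g, σ (mk α g β) = mk (φ α) (f α β g) (φ β))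
include hf

lemma aut_coord_map_mul (hσ : ∀ x y, σ (x * y) = σ x * σ y) (α β γ : Λ) (g g' : G) :
    f α γ (g * g') = f α β g * f β γ g' := by
  have h := hσ (mk α g β) (mk β g' γ)
  rw [mk_mul_mk_of_eq, hf, hf, hf, mk_mul_mk_of_eq, mk_inj] at h
  exact h.2.1

lemma aut_index_bijective (hσ : IsSemigroupAut σ) : φ.Bijective := by
  constructor
  · intro α β h
    have h_one := map_one_of_map_mul (aut_coord_map_mul hf hσ.2)
    have h_eq : σ (mk α 1 α) = σ (mk β 1 β) := by rw [hf, hf, h_one, h_one, h]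
    exact (mk_inj.mp (hσ.1.1 h_eq)).1
  · intro γ
    obtain ⟨x, hx⟩ := hσ.1.2 (mk γ 1 γ)
    obtain ⟨α, g, β, rfl⟩ :=
      exists_eq_mk_of_ne_zero ((aut_map_ne_zero_iff hσ).mp (hx ▸ mk_ne_zero γ 1 γ))
    rw [hf] at hx
    exact ⟨α, (mk_inj.mp hx).1⟩

lemma aut_coord_bijective (hσ : IsSemigroupAut σ) (hφ : φ.Injective) (a : Λ) :
    (f a a).Bijective := by
  constructor
  · intro g g' h
    have h_eq : σ (mk a g a) = σ (mk a g' a) := by rw [hf, hf, h]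
    exact (mk_inj.mp (hσ.1.1 h_eq)).2.1
  · intro k
    obtain ⟨x, hx⟩ := hσ.1.2 (mk (φ a) k (φ a))
    obtain ⟨α, g, β, rfl⟩ :=
      exists_eq_mk_of_ne_zero ((aut_map_ne_zero_iff hσ).mp (hx ▸ mk_ne_zero _ k _))
    rw [hf, mk_inj] at hx
    obtain ⟨hα, hg, hβ⟩ := hx
    obtain rfl := hφ hα
    obtain rfl := hφ hβ
    exact ⟨g, hg⟩

end Automorphism

end BrandtG

/-- Let `G` be a group, `Λ` a nonempty set, and `σ` any automorphism of the Brandt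
semigroup `B_Λ(G)`. Then there exist a group automorphism `h : G → G`, a bijection
`φ : Λ → Λ`, and a map `u : Λ → G` such that
`σ(α, g, β) = (φ(α), u(α)·h(g)·(u(β))⁻¹, φ(β))` for all `α, β ∈ Λ` and all `g ∈ G`,
and `σ(0) = 0`. -/
theorem stmt_3 {Λ G : Type*} [Nonempty Λ] [Group G]
    (σ : BrandtG Λ G → BrandtG Λ G) (hσ : IsSemigroupAut σ) :
    ∃ (h : G ≃* G) (φ : Λ ≃ Λ) (u : Λ → G),
      (∀ (α β : Λ) (g : G),
        σ (some (α, g, β)) = some (φ α, u α * h g * (u β)⁻¹, φ β)) ∧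
      σ 0 = 0 := by
  obtain ⟨φ, f, hf⟩ := BrandtG.exists_aut_map_mk hσ
  have hf_mul := BrandtG.aut_coord_map_mul hf hσ.2
  have hφ := BrandtG.aut_index_bijective hf hσ
  let a := Classical.arbitrary Λ
  let h : G ≃* G :=
    { Equiv.ofBijective (f a a) (BrandtG.aut_coord_bijective hf hσ hφ.1 a) with
      map_mul' := hf_mul a a a }
  refine ⟨h, Equiv.ofBijective φ hφ, fun α => f α a 1, fun α β g => ?_, BrandtG.aut_map_zero hσ⟩
  rw [hf, eq_mul_mul_inv_of_map_mul hf_mul a α β g]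
  rfl
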